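/- (Derivative Lemma, second order.) Let A, B : ℝ → ℝ → ℂ be C³ functions of (x,k), let k : ℝ → ℝ be differentiable, and suppose the Wronskian W(x) = A(x;k(x))·∂ₓB(x;k(x)) − ∂ₓA(x;k(x))·B(x;k(x)) is nonzero for all x in an interval I. Let a, b : ℝ → ℂ be differentiable on I and satisfy the envelope system a' = u₁₁a + u₁₂b, b' = u₂₁a + u₂₂b with the kernel matrix entries built from A, B, k. Then f(x) = a(x)A(x;k(x)) + b(x)B(x;k(x)) is twice differentiable on I with f''(x) = a(x)·∂ₓₓA(x;k(x)) + b(x)·∂ₓₓB(x;k(x)). -/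

import Mathlib

/-- Partial derivative in `x` of a basis function `F(x;k)`. -/
noncomputable def pdx (F : ℝ → ℝ → ℂ) (x k : ℝ) : ℂ := deriv (fun x' => F x' k) x

/-- Partial derivative in `k` of a basis function `F(x;k)`. -/
noncomputable def pdk (F : ℝ → ℝ → ℂ) (x k : ℝ) : ℂ := deriv (fun k' => F x k') k

/-- Mixed partial derivative: the `k`-derivative of the `x`-derivative of `F(x;k)`. -/
noncomputable def pdxk (F : ℝ → ℝ → ℂ) (x k : ℝ) : ℂ := deriv (fun k' => pdx F x k') k

/-- Second partial derivative in `x` of a basis function `F(x;k)`. -/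
noncomputable def pdxx (F : ℝ → ℝ → ℂ) (x k : ℝ) : ℂ := deriv (fun x' => pdx F x' k) x

/-- The Wronskian `W(x;k) = A ∂ₓB − ∂ₓA B` of the basis functions. -/
noncomputable def wron (A B : ℝ → ℝ → ℂ) (x k : ℝ) : ℂ :=
  A x k * pdx B x k - pdx A x k * B x k

/-- Kernel matrix entry `u₁₁ = k'(∂ₓₖA·B − ∂ₖA·∂ₓB)/W`, evaluated at `(x, k(x))`. -/
noncomputable def u11 (A B : ℝ → ℝ → ℂ) (k : ℝ → ℝ) (x : ℝ) : ℂ :=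
  (Complex.ofReal (deriv k x)) * (pdxk A x (k x) * B x (k x) - pdk A x (k x) * pdx B x (k x)) /
    wron A B x (k x)

/-- Kernel matrix entry `u₁₂ = k'(∂ₓₖB·B − ∂ₖB·∂ₓB)/W`, evaluated at `(x, k(x))`. -/
noncomputable def u12 (A B : ℝ → ℝ → ℂ) (k : ℝ → ℝ) (x : ℝ) : ℂ :=
  (Complex.ofReal (deriv k x)) * (pdxk B x (k x) * B x (k x) - pdk B x (k x) * pdx B x (k x)) /
    wron A B x (k x)

/-- Kernel matrix entry `u₂₁ = k'(∂ₖA·∂ₓA − ∂ₓₖA·A)/W`, evaluated at `(x, k(x))`. -/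
noncomputable def u21 (A B : ℝ → ℝ → ℂ) (k : ℝ → ℝ) (x : ℝ) : ℂ :=
  (Complex.ofReal (deriv k x)) * (pdk A x (k x) * pdx A x (k x) - pdxk A x (k x) * A x (k x)) /
    wron A B x (k x)

/-- Kernel matrix entry `u₂₂ = k'(∂ₓA·∂ₖB − A·∂ₓₖB)/W`, evaluated at `(x, k(x))`. -/
noncomputable def u22 (A B : ℝ → ℝ → ℂ) (k : ℝ → ℝ) (x : ℝ) : ℂ :=
  (Complex.ofReal (deriv k x)) * (pdx A x (k x) * pdk B x (k x) - A x (k x) * pdxk B x (k x)) /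
    wron A B x (k x)


/-!
Along the curve `y ↦ (y, k y)` the chain rule gives `d/dx F(x;k(x)) = ∂ₓF + k' ∂ₖF`, so
`f' = a ∂ₓA + b ∂ₓB` exactly when `a' A + b' B = -k' (a ∂ₖA + b ∂ₖB)`, and then
`f'' = a ∂ₓₓA + b ∂ₓₓB` exactly when `a' ∂ₓA + b' ∂ₓB = -k' (a ∂ₓₖA + b ∂ₓₖB)`.
The kernel matrix `U` is the solution of this pair of linear equations for `(a', b')` by
Cramer's rule, the determinant being the Wronskian; so the same cancellation step, applied to the
pair `(A, B)` and then to `(∂ₓA, ∂ₓB)`, yields both derivatives.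
-/

open Function

lemma pdx_eq_fderiv {F : ℝ → ℝ → ℂ} {x k : ℝ} (hF : DifferentiableAt ℝ (uncurry F) (x, k)) :
    pdx F x k = fderiv ℝ (uncurry F) (x, k) (1, 0) := by
  have h := hF.hasFDerivAt.comp_hasDerivAt x ((hasDerivAt_id x).prodMk (hasDerivAt_const x k))
  exact h.deriv

lemma pdk_eq_fderiv {F : ℝ → ℝ → ℂ} {x k : ℝ} (hF : DifferentiableAt ℝ (uncurry F) (x, k)) :
    pdk F x k = fderiv ℝ (uncurry F) (x, k) (0, 1) := by
  have h := hF.hasFDerivAt.comp_hasDerivAt k ((hasDerivAt_const k x).prodMk (hasDerivAt_id k))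
  exact h.deriv

lemma DifferentiableAt.hasDerivAt_comp_graph {F : ℝ → ℝ → ℂ} {k : ℝ → ℝ} {k' x : ℝ}
    (hF : DifferentiableAt ℝ (uncurry F) (x, k x)) (hk : HasDerivAt k k' x) :
    HasDerivAt (fun y => F y (k y)) (pdx F x (k x) + k' * pdk F x (k x)) x := by
  have h := hF.hasFDerivAt.comp_hasDerivAt x ((hasDerivAt_id x).prodMk hk)
  have hdir : ((1 : ℝ), k') = ((1 : ℝ), (0 : ℝ)) + k' • ((0 : ℝ), (1 : ℝ)) := by simp
  rwa [hdir, map_add, map_smul, ← pdx_eq_fderiv hF, ← pdk_eq_fderiv hF, Complex.real_smul] at h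

lemma contDiff_uncurry_pdx {F : ℝ → ℝ → ℂ} {n : WithTop ℕ∞}
    (hF : ContDiff ℝ (n + 1) (uncurry F)) : ContDiff ℝ n (uncurry (pdx F)) := by
  have hd : Differentiable ℝ (uncurry F) := hF.differentiable (by simp)
  have hpdx : uncurry (pdx F) = fun p => fderiv ℝ (uncurry F) p (1, 0) :=
    funext fun p => pdx_eq_fderiv (hd p)
  rw [hpdx]
  exact (hF.fderiv_right le_rfl).clm_apply contDiff_const

lemma hasDerivAt_envelope {P Q : ℝ → ℝ → ℂ} {k : ℝ → ℝ} {a b : ℝ → ℂ} {k' x : ℝ} {a' b' : ℂ}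
    (hP : DifferentiableAt ℝ (uncurry P) (x, k x)) (hQ : DifferentiableAt ℝ (uncurry Q) (x, k x))
    (hk : HasDerivAt k k' x) (ha : HasDerivAt a a' x) (hb : HasDerivAt b b' x)
    (hcancel : a' * P x (k x) + b' * Q x (k x) +
      k' * (a x * pdk P x (k x) + b x * pdk Q x (k x)) = 0) :
    HasDerivAt (fun y => a y * P y (k y) + b y * Q y (k y))
      (a x * pdx P x (k x) + b x * pdx Q x (k x)) x :=
  ((ha.mul (hP.hasDerivAt_comp_graph hk)).add (hb.mul (hQ.hasDerivAt_comp_graph hk))).congr_deriv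
    (by linear_combination hcancel)

section Kernel

variable (A B : ℝ → ℝ → ℂ) (k : ℝ → ℝ) {x : ℝ}

lemma kernel_apply_basis_add_pdk_eq_zero (hW : wron A B x (k x) ≠ 0) (α β : ℂ) :
    (u11 A B k x * α + u12 A B k x * β) * A x (k x) +
      (u21 A B k x * α + u22 A B k x * β) * B x (k x) +
      deriv k x * (α * pdk A x (k x) + β * pdk B x (k x)) = 0 := by
  simp only [u11, u12, u21, u22]
  field_simp
  simp only [wron]
  ring

lemma kernel_apply_pdx_add_pdxk_eq_zero (hW : wron A B x (k x) ≠ 0) (α β : ℂ) :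
    (u11 A B k x * α + u12 A B k x * β) * pdx A x (k x) +
      (u21 A B k x * α + u22 A B k x * β) * pdx B x (k x) +
      deriv k x * (α * pdxk A x (k x) + β * pdxk B x (k x)) = 0 := by
  simp only [u11, u12, u21, u22]
  field_simp
  simp only [wron]
  ring

end Kernel

/-- Derivative Lemma, second order: if the envelope coefficients `a, b`
satisfy the differential transfer matrix (envelope) system, then
`f(x) = a(x)A(x;k(x)) + b(x)B(x;k(x))` is twice differentiable with
`f''(x) = a(x)∂ₓₓA(x;k(x)) + b(x)∂ₓₓB(x;k(x))`. -/
theorem derivative_lemma_second_order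
    (A B : ℝ → ℝ → ℂ)
    (hA : ContDiff ℝ 3 fun p : ℝ × ℝ => A p.1 p.2)
    (hB : ContDiff ℝ 3 fun p : ℝ × ℝ => B p.1 p.2)
    (k : ℝ → ℝ) (hk : Differentiable ℝ k)
    (I : Set ℝ) (hI : IsOpen I)
    (hW : ∀ x ∈ I, wron A B x (k x) ≠ 0)
    (a b : ℝ → ℂ)
    (ha : ∀ x ∈ I, HasDerivAt a (u11 A B k x * a x + u12 A B k x * b x) x)
    (hb : ∀ x ∈ I, HasDerivAt b (u21 A B k x * a x + u22 A B k x * b x) x) :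
    ∀ x ∈ I, HasDerivAt (deriv (fun y => a y * A y (k y) + b y * B y (k y)))
      (a x * pdxx A x (k x) + b x * pdxx B x (k x)) x := by
  intro x hx
  have hA₁ : Differentiable ℝ (uncurry A) := hA.differentiable (by norm_num)
  have hB₁ : Differentiable ℝ (uncurry B) := hB.differentiable (by norm_num)
  have hA₂ : Differentiable ℝ (uncurry (pdx A)) :=
    (contDiff_uncurry_pdx (n := 2) hA).differentiable (by norm_num)
  have hB₂ : Differentiable ℝ (uncurry (pdx B)) :=
    (contDiff_uncurry_pdx (n := 2) hB).differentiable (by norm_num)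
  have first_deriv : ∀ y ∈ I, HasDerivAt (fun y => a y * A y (k y) + b y * B y (k y))
      (a y * pdx A y (k y) + b y * pdx B y (k y)) y := fun y hy =>
    hasDerivAt_envelope (hA₁ _) (hB₁ _) (hk y).hasDerivAt (ha y hy) (hb y hy)
      (kernel_apply_basis_add_pdk_eq_zero A B k (hW y hy) _ _)
  refine (hasDerivAt_envelope (hA₂ _) (hB₂ _) (hk x).hasDerivAt (ha x hx) (hb x hx)
    (kernel_apply_pdx_add_pdxk_eq_zero A B k (hW x hx) _ _)).congr_of_eventuallyEq ?_
  filter_upwards [hI.mem_nhds hx] with y hy using (first_deriv y hy).deriv
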